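/- arXiv:math/0312148 — 5 statements merged into one kernel-verified Lean document; each statement's English description precedes it below -/
import Mathlib

section
/- Let A, B be real numbers with A + B + 1 < 0 and let C be a non-negative integer. Then there exists a constant D₂ > 0, independent of h, such that for every non-negative integer h, ∑_{k=0}^∞ (k+1)^A (h+k+1)^B (log(h+k+2))^C ≤ D₂ · (h+1)^(max(B, A+B+1)) · (log(h+2))^(C+1). -/
open MeasureTheory

/-- Pochhammer symbol `(x)_k = x(x+1)⋯(x+k-1)`. -/
noncomputable def poch (x : ℂ) (k : ℕ) : ℂ := ∏ i ∈ Finset.range k, (x + (i : ℂ))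

/-- Generalized hypergeometric series with upper parameters `α`, lower parameters `β`. -/
noncomputable def hyp (α β : List ℂ) (z : ℂ) : ℂ :=
  ∑' k : ℕ, ((α.map fun w => poch w k).prod /
    ((β.map fun w => poch w k).prod * (Nat.factorial k : ℂ))) * z ^ k

/-- Nested expression: `nestR [x₁,…,x_m] = 1 - (1 - (⋯(1 - x_m)x_{m-1}⋯))x₁`. -/
def nestR : List ℝ → ℝ
  | [] => 1
  | t :: rest => 1 - nestR rest * t

/-- The Vasilyev-type integral `J_m(a₀,…,a_m; b₁,…,b_m; z)`. -/
noncomputable def Jint (m : ℕ) (a b : ℕ → ℂ) (z : ℂ) : ℂ :=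
  ∫ x in Set.univ.pi fun _ : Fin m => Set.Ioo (0:ℝ) 1,
    (∏ i : Fin m, ((x i : ℂ) ^ (a (i.1+1) - 1) *
        ((1 - x i : ℝ) : ℂ) ^ (b (i.1+1) - a (i.1+1) - 1))) /
      ((1 - ((nestR (List.ofFn x).tail * (List.ofFn x).headI : ℝ) : ℂ) * z) ^ (a 0))

/-!
Split the sum at `k = h`. For `k < h` we have `h + k + 1 ≍ h + 1`, `log (h + k + 2) ≍ log (h + 2)`
and `(k + 1) ^ A ≤ (h + 1) ^ max 0 (A + 1) / (k + 1)`; the harmonic sum over `k < h` produces the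
extra factor `log (h + 2)`. For `k ≥ h` we have `h + k + 1 ≍ k + 1` and
`log (h + k + 2) ≍ log (k + 2)`, so the tail is controlled by
`∑_{k ≥ h} (k + 1) ^ (A + B) * log (k + 2) ^ C = O((h + 1) ^ (A + B + 1) * log (h + 2) ^ C)`:
each logarithm is traded for a small power `((k + 1) / (h + 1)) ^ δ` and the remaining power sum
is compared with an integral. A uniform bound on the partial sums gives both summability and the
estimate.
-/

open Real Finset

lemma rpow_le_two_rpow_abs_mul {x y : ℝ} (hx : 0 < x) (hy : 0 < y) (hxy : x ≤ 2 * y)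
    (hyx : y ≤ 2 * x) (B : ℝ) : x ^ B ≤ 2 ^ |B| * y ^ B := by
  rcases le_total 0 B with hB | hB
  · rw [abs_of_nonneg hB, ← mul_rpow zero_le_two hy.le]
    exact rpow_le_rpow hx.le hxy hB
  · rw [abs_of_nonpos hB, rpow_neg zero_le_two, ← div_eq_inv_mul, ← div_rpow hy.le zero_le_two]
    exact rpow_le_rpow_of_nonpos (by positivity) (by linarith) hB

lemma log_pow_le_two_pow_mul_log_pow {x y : ℝ} (hx : 1 ≤ x) (hxy : x ≤ y ^ 2) (C : ℕ) :
    log x ^ C ≤ 2 ^ C * log y ^ C := by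
  have hlog : log x ≤ 2 * log y := by
    calc log x ≤ log (y ^ 2) := log_le_log (by linarith) hxy
      _ = 2 * log y := by rw [log_pow, Nat.cast_ofNat]
  rw [← mul_pow]
  exact pow_le_pow_left₀ (log_nonneg hx) hlog C

lemma sum_range_inv_le_log (n : ℕ) :
    ∑ k ∈ range n, ((k : ℝ) + 1)⁻¹ ≤ 2 / log 2 * log (n + 2) := by
  have harm : ∑ k ∈ range n, ((k : ℝ) + 1)⁻¹ ≤ 1 + log n := by
    simpa [harmonic] using harmonic_le_one_add_log n
  have hlog2 : 0 < log 2 := log_pos one_lt_two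
  have hlog2_le : log 2 ≤ log (n + 2) := log_le_log two_pos (by linarith [n.cast_nonneg (α := ℝ)])
  have hlogn : log n ≤ log (n + 2) := by
    rcases n.eq_zero_or_pos with rfl | hn
    · simpa using hlog2.le
    · exact log_le_log (by exact_mod_cast hn) (by linarith)
  have hlog2_lt : log 2 < 1 := by linarith [log_two_lt_d9]
  rw [div_mul_eq_mul_div, le_div_iff₀ hlog2]
  nlinarith

lemma log_add_one_le_mul_rpow {x y δ : ℝ} (hy : 1 ≤ y) (hyx : y ≤ x) (hδ : 0 < δ) :
    log (x + 1) ≤ (1 + 1 / (δ * log 2)) * log (y + 1) * (x / y) ^ δ := by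
  set r := x / y
  have hr : 1 ≤ r := (one_le_div (by linarith)).mpr hyx
  have hlog2 : 0 < log 2 := log_pos one_lt_two
  have hlogy : log 2 ≤ log (y + 1) := log_le_log two_pos (by linarith)
  have hrδ : 1 ≤ r ^ δ := one_le_rpow hr hδ.le
  have hsplit : log (x + 1) ≤ log (y + 1) + log r := by
    rw [← log_mul (by linarith) (by linarith)]
    refine log_le_log (by linarith) ?_
    rw [mul_div_assoc', le_div_iff₀ (by linarith)]
    nlinarith
  have hlogr : log r ≤ log (y + 1) / log 2 * (r ^ δ / δ) := by
    refine (log_le_rpow_div (by linarith) hδ).trans (le_mul_of_one_le_left (by positivity) ?_)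
    rwa [one_le_div hlog2]
  calc log (x + 1) ≤ log (y + 1) * r ^ δ + log (y + 1) / log 2 * (r ^ δ / δ) := by
        nlinarith
    _ = (1 + 1 / (δ * log 2)) * log (y + 1) * r ^ δ := by field_simp

lemma sum_Ico_rpow_le {t : ℝ} (ht : t < -1) (m N : ℕ) :
    ∑ k ∈ Ico m N, ((k : ℝ) + 1) ^ t ≤ 2 ^ |t| / -(t + 1) * ((m : ℝ) + 1) ^ (t + 1) := by
  have hm : (0 : ℝ) < m + 1 := by positivity
  have hint : ∑ k ∈ Ico m N, ((k : ℝ) + 2) ^ t ≤ ((m : ℝ) + 1) ^ (t + 1) / -(t + 1) := by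
    rcases le_total N m with hNm | hmN
    · rw [Ico_eq_empty_of_le hNm, sum_empty]
      exact div_nonneg (by positivity) (by linarith)
    have hanti : AntitoneOn (fun x : ℝ => x ^ t) (Set.Icc ((m + 1 : ℕ) : ℝ) ((N + 1 : ℕ) : ℝ)) :=
      fun x hx y _ hxy => rpow_le_rpow_of_nonpos (by push_cast at hx; linarith [hx.1]) hxy
        (by linarith)
    have hcmp := hanti.sum_le_integral_Ico (by omega)
    rw [← sum_Ico_add' (fun i : ℕ => ((i + 1 : ℕ) : ℝ) ^ t), integral_rpow
      (Or.inr ⟨by linarith, Set.notMem_uIcc_of_lt (by positivity) (by positivity)⟩)] at hcmp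
    push_cast at hcmp
    have hN : 0 < ((N : ℝ) + 1) ^ (t + 1) := by positivity
    calc ∑ k ∈ Ico m N, ((k : ℝ) + 2) ^ t = ∑ k ∈ Ico m N, ((k : ℝ) + 1 + 1) ^ t := by
          simp only [add_assoc, one_add_one_eq_two]
      _ ≤ (((N : ℝ) + 1) ^ (t + 1) - ((m : ℝ) + 1) ^ (t + 1)) / (t + 1) := hcmp
      _ ≤ ((m : ℝ) + 1) ^ (t + 1) / -(t + 1) := by
          rw [← neg_div_neg_eq, neg_sub]
          exact div_le_div_of_nonneg_right (by linarith) (by linarith)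
  calc ∑ k ∈ Ico m N, ((k : ℝ) + 1) ^ t ≤ ∑ k ∈ Ico m N, 2 ^ |t| * ((k : ℝ) + 2) ^ t :=
        sum_le_sum fun k _ => rpow_le_two_rpow_abs_mul (by positivity) (by positivity)
          (by linarith) (by linarith) t
    _ ≤ 2 ^ |t| / -(t + 1) * ((m : ℝ) + 1) ^ (t + 1) := by
        rw [← mul_sum, div_mul_eq_mul_div, mul_div_assoc]
        exact mul_le_mul_of_nonneg_left hint (by positivity)

lemma rpow_mul_log_pow_le {x y δ : ℝ} (s : ℝ) (hy : 1 ≤ y) (hyx : y ≤ x) (hδ : 0 < δ) (C : ℕ) :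
    x ^ s * log (x + 1) ^ C ≤
      (1 + 1 / (δ * log 2)) ^ C * log (y + 1) ^ C * y ^ (-(δ * C)) * x ^ (s + δ * C) := by
  have hx : 0 < x := by linarith
  have hlog := pow_le_pow_left₀ (log_nonneg (by linarith)) (log_add_one_le_mul_rpow hy hyx hδ) C
  rw [mul_pow, mul_pow, ← rpow_mul_natCast (by positivity), div_rpow hx.le (by linarith)] at hlog
  calc x ^ s * log (x + 1) ^ C
      ≤ x ^ s * ((1 + 1 / (δ * log 2)) ^ C * log (y + 1) ^ C * (x ^ (δ * C) / y ^ (δ * C))) :=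
        mul_le_mul_of_nonneg_left hlog (by positivity)
    _ = _ := by
        rw [rpow_add hx, rpow_neg (by linarith)]
        ring

lemma exists_sum_Ico_rpow_mul_log_pow_le {s : ℝ} (hs : s < -1) (C : ℕ) :
    ∃ c > 0, ∀ m N : ℕ, ∑ k ∈ Ico m N, ((k : ℝ) + 1) ^ s * log ((k : ℝ) + 2) ^ C ≤
      c * (((m : ℝ) + 1) ^ (s + 1) * log ((m : ℝ) + 2) ^ C) := by
  set δ : ℝ := (-1 - s) / (C + 1)
  have hδ : 0 < δ := div_pos (by linarith) (by positivity)
  have hδC : δ * C < -1 - s := by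
    rw [div_mul_eq_mul_div, div_lt_iff₀ (by positivity)]
    nlinarith
  set t := s + δ * C
  have ht : t < -1 := by linarith
  set c₁ := (1 + 1 / (δ * log 2)) ^ C
  refine ⟨c₁ * (2 ^ |t| / -(t + 1)),
    mul_pos (by positivity) (div_pos (by positivity) (by linarith)), fun m N => ?_⟩
  have hm : (1 : ℝ) ≤ m + 1 := by linarith [m.cast_nonneg (α := ℝ)]
  have hlogm : 0 ≤ log ((m : ℝ) + 2) := log_nonneg (by linarith)
  calc ∑ k ∈ Ico m N, ((k : ℝ) + 1) ^ s * log ((k : ℝ) + 2) ^ C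
      ≤ ∑ k ∈ Ico m N, c₁ * log ((m : ℝ) + 2) ^ C * ((m : ℝ) + 1) ^ (-(δ * C)) *
          ((k : ℝ) + 1) ^ t := by
        refine sum_le_sum fun k hk => ?_
        have hmk : (m : ℝ) ≤ k := by exact_mod_cast (mem_Ico.mp hk).1
        have := rpow_mul_log_pow_le (x := (k : ℝ) + 1) s hm (by linarith) hδ C
        simpa only [add_assoc, one_add_one_eq_two] using this
    _ ≤ c₁ * log ((m : ℝ) + 2) ^ C * ((m : ℝ) + 1) ^ (-(δ * C)) *
          (2 ^ |t| / -(t + 1) * ((m : ℝ) + 1) ^ (t + 1)) := by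
        rw [← mul_sum]
        exact mul_le_mul_of_nonneg_left (sum_Ico_rpow_le ht m N) (by positivity)
    _ = c₁ * (2 ^ |t| / -(t + 1)) * (((m : ℝ) + 1) ^ (s + 1) * log ((m : ℝ) + 2) ^ C) := by
        have hexp : ((m : ℝ) + 1) ^ (-(δ * C)) * ((m : ℝ) + 1) ^ (t + 1) =
            ((m : ℝ) + 1) ^ (s + 1) := by
          rw [← rpow_add (by positivity)]
          congr 1
          simp only [t]
          ring
        rw [← hexp]
        ring

section

variable (A B : ℝ) (C : ℕ)

lemma head_term_le {h k : ℕ} (hkh : k ≤ h) :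
    ((k : ℝ) + 1) ^ A * ((h : ℝ) + k + 1) ^ B * log ((h : ℝ) + k + 2) ^ C ≤
      2 ^ |B| * 2 ^ C * (((h : ℝ) + 1) ^ max B (A + B + 1) * log ((h : ℝ) + 2) ^ C) *
        ((k : ℝ) + 1)⁻¹ := by
  have hkh' : (k : ℝ) ≤ h := by exact_mod_cast hkh
  have hk : (1 : ℝ) ≤ k + 1 := by linarith [k.cast_nonneg (α := ℝ)]
  have hsplit : ((k : ℝ) + 1) ^ A = ((k : ℝ) + 1) ^ (A + 1) * ((k : ℝ) + 1)⁻¹ := by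
    rw [rpow_add_one (by positivity), mul_inv_cancel_right₀ (by positivity)]
  have hpow : ((k : ℝ) + 1) ^ (A + 1) ≤ ((h : ℝ) + 1) ^ max 0 (A + 1) :=
    (rpow_le_rpow_of_exponent_le hk (le_max_right 0 _)).trans
      (rpow_le_rpow (by positivity) (by linarith) (le_max_left _ _))
  have hB := rpow_le_two_rpow_abs_mul (x := (h : ℝ) + k + 1) (y := (h : ℝ) + 1)
    (by positivity) (by positivity) (by linarith) (by linarith) B
  have hlog := log_pow_le_two_pow_mul_log_pow (x := (h : ℝ) + k + 2) (y := (h : ℝ) + 2)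
    (by linarith) (by nlinarith) C
  have hexp : ((h : ℝ) + 1) ^ max B (A + B + 1) =
      ((h : ℝ) + 1) ^ B * ((h : ℝ) + 1) ^ max 0 (A + 1) := by
    rw [← rpow_add (by positivity), ← max_add_add_left, add_zero, ← add_assoc, add_comm B A]
  have hlog_nonneg : 0 ≤ log ((h : ℝ) + k + 2) ^ C := pow_nonneg (log_nonneg (by linarith)) C
  rw [hsplit, hexp]
  calc ((k : ℝ) + 1) ^ (A + 1) * ((k : ℝ) + 1)⁻¹ * ((h : ℝ) + k + 1) ^ B * log ((h : ℝ) + k + 2) ^ C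
      ≤ ((h : ℝ) + 1) ^ max 0 (A + 1) * ((k : ℝ) + 1)⁻¹ * (2 ^ |B| * ((h : ℝ) + 1) ^ B) *
          (2 ^ C * log ((h : ℝ) + 2) ^ C) := by gcongr
    _ = _ := by ring

lemma tail_term_le {h k : ℕ} (hhk : h ≤ k) :
    ((k : ℝ) + 1) ^ A * ((h : ℝ) + k + 1) ^ B * log ((h : ℝ) + k + 2) ^ C ≤
      2 ^ |B| * 2 ^ C * (((k : ℝ) + 1) ^ (A + B) * log ((k : ℝ) + 2) ^ C) := by
  have hhk' : (h : ℝ) ≤ k := by exact_mod_cast hhk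
  have hh : (0 : ℝ) ≤ h := h.cast_nonneg
  have hB := rpow_le_two_rpow_abs_mul (x := (h : ℝ) + k + 1) (y := (k : ℝ) + 1)
    (by positivity) (by positivity) (by linarith) (by linarith) B
  have hlog := log_pow_le_two_pow_mul_log_pow (x := (h : ℝ) + k + 2) (y := (k : ℝ) + 2)
    (by linarith) (by nlinarith) C
  have hlog_nonneg : 0 ≤ log ((h : ℝ) + k + 2) ^ C := pow_nonneg (log_nonneg (by linarith)) C
  calc ((k : ℝ) + 1) ^ A * ((h : ℝ) + k + 1) ^ B * log ((h : ℝ) + k + 2) ^ C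
      ≤ ((k : ℝ) + 1) ^ A * (2 ^ |B| * ((k : ℝ) + 1) ^ B) * (2 ^ C * log ((k : ℝ) + 2) ^ C) := by
        gcongr
    _ = _ := by
        rw [rpow_add (by positivity)]
        ring

lemma sum_range_head_le (h : ℕ) :
    ∑ k ∈ range h, ((k : ℝ) + 1) ^ A * ((h : ℝ) + k + 1) ^ B * log ((h : ℝ) + k + 2) ^ C ≤
      2 ^ |B| * 2 ^ C * (2 / log 2) * ((h : ℝ) + 1) ^ max B (A + B + 1) *
        log ((h : ℝ) + 2) ^ (C + 1) := by
  have hlog : 0 ≤ log ((h : ℝ) + 2) := log_nonneg (by linarith [h.cast_nonneg (α := ℝ)])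
  calc _ ≤ ∑ k ∈ range h, 2 ^ |B| * 2 ^ C *
          (((h : ℝ) + 1) ^ max B (A + B + 1) * log ((h : ℝ) + 2) ^ C) * ((k : ℝ) + 1)⁻¹ :=
        sum_le_sum fun k hk => head_term_le A B C (mem_range.mp hk).le
    _ ≤ 2 ^ |B| * 2 ^ C * (((h : ℝ) + 1) ^ max B (A + B + 1) * log ((h : ℝ) + 2) ^ C) *
          (2 / log 2 * log (h + 2)) := by
        rw [← mul_sum]
        exact mul_le_mul_of_nonneg_left (sum_range_inv_le_log h) (by positivity)
    _ = _ := by ring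

lemma exists_sum_Ico_tail_le (hAB : A + B + 1 < 0) : ∃ c > 0, ∀ h N : ℕ,
    ∑ k ∈ Ico h N, ((k : ℝ) + 1) ^ A * ((h : ℝ) + k + 1) ^ B * log ((h : ℝ) + k + 2) ^ C ≤
      c * ((h : ℝ) + 1) ^ max B (A + B + 1) * log ((h : ℝ) + 2) ^ (C + 1) := by
  obtain ⟨c, hc, hsum⟩ := exists_sum_Ico_rpow_mul_log_pow_le (s := A + B) (by linarith) C
  refine ⟨2 ^ |B| * 2 ^ C * c / log 2, by positivity, fun h N => ?_⟩
  have hlog2 : log 2 ≤ log ((h : ℝ) + 2) :=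
    log_le_log two_pos (by linarith [h.cast_nonneg (α := ℝ)])
  have hlog : 0 ≤ log ((h : ℝ) + 2) := (log_pos one_lt_two).le.trans hlog2
  have hlogC : log ((h : ℝ) + 2) ^ C ≤ log ((h : ℝ) + 2) ^ (C + 1) / log 2 := by
    rw [le_div_iff₀ (log_pos one_lt_two), pow_succ]
    exact mul_le_mul_of_nonneg_left hlog2 (pow_nonneg hlog C)
  have hexp : ((h : ℝ) + 1) ^ (A + B + 1) ≤ ((h : ℝ) + 1) ^ max B (A + B + 1) :=
    rpow_le_rpow_of_exponent_le (by linarith [h.cast_nonneg (α := ℝ)]) (le_max_right _ _)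
  calc _ ≤ ∑ k ∈ Ico h N, 2 ^ |B| * 2 ^ C * (((k : ℝ) + 1) ^ (A + B) * log ((k : ℝ) + 2) ^ C) :=
        sum_le_sum fun k hk => tail_term_le A B C (mem_Ico.mp hk).1
    _ ≤ 2 ^ |B| * 2 ^ C * (c * (((h : ℝ) + 1) ^ (A + B + 1) * log ((h : ℝ) + 2) ^ C)) := by
        rw [← mul_sum]
        exact mul_le_mul_of_nonneg_left (hsum h N) (by positivity)
    _ ≤ 2 ^ |B| * 2 ^ C * (c * (((h : ℝ) + 1) ^ max B (A + B + 1) *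
          (log ((h : ℝ) + 2) ^ (C + 1) / log 2))) := by
        gcongr
    _ = _ := by ring

end

/-- a summation estimate. -/
theorem sum_power_log_bound (A B : ℝ) (hAB : A + B + 1 < 0) (C : ℕ) :
    ∃ D₂ : ℝ, 0 < D₂ ∧ ∀ h : ℕ,
      (Summable fun k : ℕ =>
        ((k : ℝ) + 1) ^ A * ((h : ℝ) + k + 1) ^ B * (Real.log ((h : ℝ) + k + 2)) ^ C) ∧
      (∑' k : ℕ, ((k : ℝ) + 1) ^ A * ((h : ℝ) + k + 1) ^ B * (Real.log ((h : ℝ) + k + 2)) ^ C)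
        ≤ D₂ * ((h : ℝ) + 1) ^ (max B (A + B + 1)) * (Real.log ((h : ℝ) + 2)) ^ (C + 1) := by
  obtain ⟨c, hc, htail⟩ := exists_sum_Ico_tail_le A B C hAB
  refine ⟨2 ^ |B| * 2 ^ C * (2 / log 2) + c, by positivity, fun h => ?_⟩
  set f : ℕ → ℝ := fun k => ((k : ℝ) + 1) ^ A * ((h : ℝ) + k + 1) ^ B * log ((h : ℝ) + k + 2) ^ C
  have hf : ∀ k, 0 ≤ f k := fun k => by
    have : 0 ≤ log ((h : ℝ) + k + 2) :=
      log_nonneg (by linarith [h.cast_nonneg (α := ℝ), k.cast_nonneg (α := ℝ)])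
    positivity
  have hpartial : ∀ N, ∑ k ∈ range N, f k ≤
      (2 ^ |B| * 2 ^ C * (2 / log 2) + c) * ((h : ℝ) + 1) ^ max B (A + B + 1) *
        log ((h : ℝ) + 2) ^ (C + 1) := fun N =>
    calc ∑ k ∈ range N, f k ≤ ∑ k ∈ range (max N h), f k :=
          sum_le_sum_of_subset_of_nonneg (range_subset_range.mpr (le_max_left _ _))
            fun k _ _ => hf k
      _ = ∑ k ∈ range h, f k + ∑ k ∈ Ico h (max N h), f k :=
          (sum_range_add_sum_Ico f (le_max_right _ _)).symm
      _ ≤ _ := add_le_add (sum_range_head_le A B C h) (htail h _)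
      _ = _ := by ring
  exact ⟨summable_of_sum_range_le hf hpartial, Real.tsum_le_of_sum_range_le hf hpartial⟩
end

section
/- Let s ≥ 1 and let E_j, F_j (j = 1,…,s) be real numbers. For each j let Z_j = {F_j, E_j + F_j + 1}. Suppose that for every r = 1,…,s one has E_r + F_r + 1 + max(Z_{r+1} + Z_{r+2} + ⋯ + Z_s) < 0, where S + T denotes the sum-set {x + y : x ∈ S, y ∈ T} and the empty sum-set sum is {0}. Then the multiple series ∑_{k₁,…,k_s ≥ 0} ∏_{j=1}^{s} (k_j + 1)^{E_j} (k₁ + ⋯ + k_j + 1)^{F_j} converges. -/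
open MeasureTheory

set_option maxHeartbeats 1000000
private lemma rpow_shift_summable {p : ℝ} (hp : p < -1) :
    Summable (fun k : ℕ => ((k : ℝ) + 1) ^ p) := by
  have h1 : Summable (fun n : ℕ => (n : ℝ) ^ p) := Real.summable_nat_rpow.2 hp
  have h2 := (summable_nat_add_iff (f := fun n : ℕ => (n : ℝ) ^ p) 1).2 h1
  refine h2.congr fun k => ?_
  push_cast
  rfl

private lemma rpow_le_mul_rpow {x y c F : ℝ} (hx : 0 < x) (hc : 1 ≤ c) (hxy : x ≤ y)
    (hyx : y ≤ c * x) : y ^ F ≤ c ^ (max F 0) * x ^ F := by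
  rcases le_or_gt 0 F with hF | hF
  · have h1 : y ^ F ≤ (c * x) ^ F :=
      Real.rpow_le_rpow (le_trans hx.le hxy) hyx hF
    rw [Real.mul_rpow (by linarith) hx.le] at h1
    rwa [max_eq_left hF]
  · have h1 : y ^ F ≤ x ^ F := Real.rpow_le_rpow_of_nonpos hx hxy hF.le
    rw [max_eq_right hF.le, Real.rpow_zero, one_mul]
    exact h1

private lemma head_bound {E q : ℝ} (hq0 : 0 < q) (hqE : E + 1 < q) :
    ∃ C : ℝ, 0 < C ∧ ∀ N : ℕ,
      ∑ k ∈ Finset.range (N + 1), ((k : ℝ) + 1) ^ E ≤ C * ((N : ℝ) + 1) ^ q := by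
  set e : ℝ := min E ((E - q - 1) / 2) with he
  have heE : e ≤ E := min_le_left _ _
  have he1 : e < -1 := by
    rcases lt_or_ge E (-1) with hE | hE
    · exact lt_of_le_of_lt heE hE
    · calc e ≤ (E - q - 1) / 2 := min_le_right _ _
        _ < -1 := by linarith
  have heq : E - q ≤ e := le_min (by linarith) (by linarith)
  have hsum := rpow_shift_summable he1
  refine ⟨∑' k : ℕ, ((k : ℝ) + 1) ^ e,
    Summable.tsum_pos hsum (fun i => by positivity) 0 (by positivity), fun N => ?_⟩
  have step : ∀ k ∈ Finset.range (N + 1),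
      ((k : ℝ) + 1) ^ E ≤ ((k : ℝ) + 1) ^ e * ((N : ℝ) + 1) ^ (E - e) := by
    intro k hk
    have hk' : (k : ℝ) + 1 ≤ (N : ℝ) + 1 := by
      have := Finset.mem_range.1 hk
      have : (k : ℝ) ≤ (N : ℝ) := by exact_mod_cast Nat.lt_succ_iff.1 this
      linarith
    have h0 : (0 : ℝ) < (k : ℝ) + 1 := by positivity
    calc ((k : ℝ) + 1) ^ E = ((k : ℝ) + 1) ^ e * ((k : ℝ) + 1) ^ (E - e) := by
          rw [← Real.rpow_add h0]; ring_nf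
      _ ≤ ((k : ℝ) + 1) ^ e * ((N : ℝ) + 1) ^ (E - e) := by
          have := Real.rpow_le_rpow h0.le hk' (by linarith : (0:ℝ) ≤ E - e)
          exact mul_le_mul_of_nonneg_left this (Real.rpow_nonneg h0.le e)
  calc ∑ k ∈ Finset.range (N + 1), ((k : ℝ) + 1) ^ E
      ≤ ∑ k ∈ Finset.range (N + 1), ((k : ℝ) + 1) ^ e * ((N : ℝ) + 1) ^ (E - e) :=
        Finset.sum_le_sum step
    _ = (∑ k ∈ Finset.range (N + 1), ((k : ℝ) + 1) ^ e) * ((N : ℝ) + 1) ^ (E - e) := by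
        rw [Finset.sum_mul]
    _ ≤ (∑' k : ℕ, ((k : ℝ) + 1) ^ e) * ((N : ℝ) + 1) ^ (E - e) := by
        have h2 := Summable.sum_le_tsum (Finset.range (N + 1)) (fun i _ => by positivity) hsum
        have h3 : (0:ℝ) ≤ ((N : ℝ) + 1) ^ (E - e) := Real.rpow_nonneg (by positivity) _
        exact mul_le_mul_of_nonneg_right h2 h3
    _ ≤ (∑' k : ℕ, ((k : ℝ) + 1) ^ e) * ((N : ℝ) + 1) ^ q := by
        have h1 : (1:ℝ) ≤ (N : ℝ) + 1 := by have : (0:ℝ) ≤ (N:ℝ) := Nat.cast_nonneg N; linarith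
        have h2 := Real.rpow_le_rpow_of_exponent_le h1 (by linarith : E - e ≤ q)
        have h3 : (0:ℝ) ≤ ∑' k : ℕ, ((k : ℝ) + 1) ^ e :=
          tsum_nonneg (fun i => by positivity)
        exact mul_le_mul_of_nonneg_left h2 h3

private lemma cast_le_cast_add_one {N : ℕ} {k : ℕ} (h : k ≤ N) : (k : ℝ) ≤ (N : ℝ) := by
  exact_mod_cast h

private lemma key_summable {E F : ℝ} (hEF : E + F + 1 < 0) (N : ℕ) :
    Summable (fun k : ℕ => ((k : ℝ) + 1) ^ E * ((N : ℝ) + (k : ℝ) + 1) ^ F) := by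
  have base := rpow_shift_summable (p := E + F) (by linarith)
  refine Summable.of_nonneg_of_le (fun k => by positivity) (fun k => ?_)
    (base.mul_left (((N : ℝ) + 1) ^ (max F 0)))
  have hN0 : (0:ℝ) ≤ (N : ℝ) := Nat.cast_nonneg N
  have hk0 : (0:ℝ) ≤ (k : ℝ) := Nat.cast_nonneg k
  have h1 : ((N : ℝ) + (k : ℝ) + 1) ^ F ≤ ((N : ℝ) + 1) ^ (max F 0) * ((k : ℝ) + 1) ^ F := by
    refine rpow_le_mul_rpow (by positivity) (by linarith) (by linarith) ?_
    nlinarith [mul_nonneg hN0 hk0]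
  calc ((k : ℝ) + 1) ^ E * ((N : ℝ) + (k : ℝ) + 1) ^ F
      ≤ ((k : ℝ) + 1) ^ E * (((N : ℝ) + 1) ^ (max F 0) * ((k : ℝ) + 1) ^ F) :=
        mul_le_mul_of_nonneg_left h1 (Real.rpow_nonneg (by positivity) _)
    _ = ((N : ℝ) + 1) ^ (max F 0) * (((k : ℝ) + 1) ^ E * ((k : ℝ) + 1) ^ F) := by ring
    _ = ((N : ℝ) + 1) ^ (max F 0) * ((k : ℝ) + 1) ^ (E + F) := by
        rw [← Real.rpow_add (by positivity : (0:ℝ) < (k:ℝ)+1)]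

private lemma key_bound {E F G : ℝ} (hEF : E + F + 1 < 0) (hGF : F < G) (hGE : E + F + 1 < G) :
    ∃ C : ℝ, 0 < C ∧ ∀ N : ℕ,
      (∑' k : ℕ, ((k : ℝ) + 1) ^ E * ((N : ℝ) + (k : ℝ) + 1) ^ F) ≤ C * ((N : ℝ) + 1) ^ G := by
  obtain ⟨C₁, hC₁, hB⟩ := head_bound (E := E) (q := G - F) (by linarith) (by linarith)
  set δ : ℝ := min (G - (E + F + 1)) (-(E + F + 1)) with hδ
  have hδ0 : 0 < δ := lt_min (by linarith) (by linarith)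
  have hδG : E + F + 1 + δ ≤ G := by
    have := min_le_left (G - (E + F + 1)) (-(E + F + 1)); linarith
  have hδ00 : E + F + 1 + δ ≤ 0 := by
    have := min_le_right (G - (E + F + 1)) (-(E + F + 1)); linarith
  have hsum2 := rpow_shift_summable (p := -1 - δ) (by linarith)
  set C₂ : ℝ := ∑' k : ℕ, ((k : ℝ) + 1) ^ (-1 - δ) with hC₂def
  have hC₂ : 0 < C₂ := Summable.tsum_pos hsum2 (fun i => by positivity) 0 (by positivity)
  refine ⟨2 ^ (max F 0) * C₁ + 2 ^ (max F 0) * C₂, by positivity, fun N => ?_⟩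
  have hs := key_summable hEF N
  have hN0 : (0:ℝ) ≤ (N : ℝ) := Nat.cast_nonneg N
  have hN1 : (1:ℝ) ≤ (N : ℝ) + 1 := by linarith
  rw [← Summable.sum_add_tsum_nat_add (f := fun k : ℕ => ((k : ℝ) + 1) ^ E * ((N : ℝ) + (k : ℝ) + 1) ^ F)
    (N + 1) hs]
  have hhead : ∑ k ∈ Finset.range (N + 1), ((k : ℝ) + 1) ^ E * ((N : ℝ) + (k : ℝ) + 1) ^ F
      ≤ 2 ^ (max F 0) * C₁ * ((N : ℝ) + 1) ^ G := by
    have step : ∀ k ∈ Finset.range (N + 1), ((k : ℝ) + 1) ^ E * ((N : ℝ) + (k : ℝ) + 1) ^ F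
        ≤ (2 ^ (max F 0) * ((N : ℝ) + 1) ^ F) * ((k : ℝ) + 1) ^ E := by
      intro k hk
      have hkN : (k : ℝ) ≤ (N : ℝ) := cast_le_cast_add_one (Nat.lt_succ_iff.1 (Finset.mem_range.1 hk))
      have hk0 : (0:ℝ) ≤ (k : ℝ) := Nat.cast_nonneg k
      have h1 : ((N : ℝ) + (k : ℝ) + 1) ^ F ≤ 2 ^ (max F 0) * ((N : ℝ) + 1) ^ F :=
        rpow_le_mul_rpow (by linarith) (by norm_num) (by linarith) (by linarith)
      calc ((k : ℝ) + 1) ^ E * ((N : ℝ) + (k : ℝ) + 1) ^ F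
          ≤ ((k : ℝ) + 1) ^ E * (2 ^ (max F 0) * ((N : ℝ) + 1) ^ F) :=
            mul_le_mul_of_nonneg_left h1 (Real.rpow_nonneg (by positivity) _)
        _ = (2 ^ (max F 0) * ((N : ℝ) + 1) ^ F) * ((k : ℝ) + 1) ^ E := by ring
    calc ∑ k ∈ Finset.range (N + 1), ((k : ℝ) + 1) ^ E * ((N : ℝ) + (k : ℝ) + 1) ^ F
        ≤ ∑ k ∈ Finset.range (N + 1), (2 ^ (max F 0) * ((N : ℝ) + 1) ^ F) * ((k : ℝ) + 1) ^ E :=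
          Finset.sum_le_sum step
      _ = (2 ^ (max F 0) * ((N : ℝ) + 1) ^ F) * ∑ k ∈ Finset.range (N + 1), ((k : ℝ) + 1) ^ E := by
          rw [Finset.mul_sum]
      _ ≤ (2 ^ (max F 0) * ((N : ℝ) + 1) ^ F) * (C₁ * ((N : ℝ) + 1) ^ (G - F)) := by
          exact mul_le_mul_of_nonneg_left (hB N) (by positivity)
      _ = 2 ^ (max F 0) * C₁ * (((N : ℝ) + 1) ^ F * ((N : ℝ) + 1) ^ (G - F)) := by ring
      _ = 2 ^ (max F 0) * C₁ * ((N : ℝ) + 1) ^ G := by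
          rw [← Real.rpow_add (by positivity : (0:ℝ) < (N:ℝ)+1)]
          ring_nf
  have htail : (∑' k : ℕ, (((k + (N + 1) : ℕ) : ℝ) + 1) ^ E *
        ((N : ℝ) + ((k + (N + 1) : ℕ) : ℝ) + 1) ^ F)
      ≤ 2 ^ (max F 0) * C₂ * ((N : ℝ) + 1) ^ G := by
    have hsum3 : Summable (fun k : ℕ => (((k + (N + 1) : ℕ) : ℝ) + 1) ^ E *
        ((N : ℝ) + ((k + (N + 1) : ℕ) : ℝ) + 1) ^ F) := (summable_nat_add_iff (N + 1)).2 hs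
    have step : ∀ k : ℕ, (((k + (N + 1) : ℕ) : ℝ) + 1) ^ E *
        ((N : ℝ) + ((k + (N + 1) : ℕ) : ℝ) + 1) ^ F
        ≤ (2 ^ (max F 0) * ((N : ℝ) + 1) ^ (E + F + 1 + δ)) * ((k : ℝ) + 1) ^ (-1 - δ) := by
      intro k
      have hk0 : (0:ℝ) ≤ (k : ℝ) := Nat.cast_nonneg k
      have hcast : ((k + (N + 1) : ℕ) : ℝ) = (k : ℝ) + (N : ℝ) + 1 := by push_cast; ring
      rw [hcast]
      set a : ℝ := (k : ℝ) with ha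
      set b : ℝ := (N : ℝ) with hb
      have hx : (0:ℝ) < a + b + 2 := by linarith
      have h1 : (b + (a + b + 1) + 1) ^ F ≤ 2 ^ (max F 0) * (a + b + 2) ^ F :=
        rpow_le_mul_rpow hx (by norm_num) (by linarith) (by linarith)
      have h2 : (a + b + 2) ^ E * (a + b + 2) ^ F = (a + b + 2) ^ (E + F) := by
        rw [← Real.rpow_add hx]
      have h3 : (a + b + 2) ^ (E + F) = (a + b + 2) ^ (E + F + 1 + δ) * (a + b + 2) ^ (-1 - δ) := by
        rw [← Real.rpow_add hx]; ring_nf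
      have h4 : (a + b + 2) ^ (E + F + 1 + δ) ≤ (b + 1) ^ (E + F + 1 + δ) :=
        Real.rpow_le_rpow_of_nonpos (by linarith) (by linarith) hδ00
      have h5 : (a + b + 2) ^ (-1 - δ) ≤ (a + 1) ^ (-1 - δ) :=
        Real.rpow_le_rpow_of_nonpos (by linarith) (by linarith) (by linarith)
      calc (a + b + 1 + 1) ^ E * (b + (a + b + 1) + 1) ^ F
          ≤ (a + b + 1 + 1) ^ E * (2 ^ (max F 0) * (a + b + 2) ^ F) :=
            mul_le_mul_of_nonneg_left h1 (Real.rpow_nonneg (by linarith) _)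
        _ = 2 ^ (max F 0) * ((a + b + 2) ^ E * (a + b + 2) ^ F) := by
            rw [show a+b+1+1 = a+b+2 by ring]; ring
        _ = 2 ^ (max F 0) * ((a + b + 2) ^ (E + F + 1 + δ) * (a + b + 2) ^ (-1 - δ)) := by
            rw [h2, h3]
        _ ≤ 2 ^ (max F 0) * ((b + 1) ^ (E + F + 1 + δ) * (a + 1) ^ (-1 - δ)) := by
            refine mul_le_mul_of_nonneg_left ?_ (by positivity)
            exact mul_le_mul h4 h5 (Real.rpow_nonneg hx.le _) (Real.rpow_nonneg (by linarith) _)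
        _ = (2 ^ (max F 0) * (b + 1) ^ (E + F + 1 + δ)) * (a + 1) ^ (-1 - δ) := by ring
    calc (∑' k : ℕ, (((k + (N + 1) : ℕ) : ℝ) + 1) ^ E *
          ((N : ℝ) + ((k + (N + 1) : ℕ) : ℝ) + 1) ^ F)
        ≤ ∑' k : ℕ, (2 ^ (max F 0) * ((N : ℝ) + 1) ^ (E + F + 1 + δ)) * ((k : ℝ) + 1) ^ (-1 - δ) :=
          Summable.tsum_le_tsum step hsum3 (hsum2.mul_left _)
      _ = (2 ^ (max F 0) * ((N : ℝ) + 1) ^ (E + F + 1 + δ)) * C₂ := by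
          rw [tsum_mul_left]
      _ ≤ (2 ^ (max F 0) * ((N : ℝ) + 1) ^ G) * C₂ := by
          refine mul_le_mul_of_nonneg_right (mul_le_mul_of_nonneg_left ?_ (by positivity)) hC₂.le
          exact Real.rpow_le_rpow_of_exponent_le hN1 hδG
      _ = 2 ^ (max F 0) * C₂ * ((N : ℝ) + 1) ^ G := by ring
  calc (∑ k ∈ Finset.range (N + 1), ((k : ℝ) + 1) ^ E * ((N : ℝ) + (k : ℝ) + 1) ^ F) +
        ∑' k : ℕ, (((k + (N + 1) : ℕ) : ℝ) + 1) ^ E * ((N : ℝ) + ((k + (N + 1) : ℕ) : ℝ) + 1) ^ F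
      ≤ 2 ^ (max F 0) * C₁ * ((N : ℝ) + 1) ^ G + 2 ^ (max F 0) * C₂ * ((N : ℝ) + 1) ^ G :=
        add_le_add hhead htail
    _ = (2 ^ (max F 0) * C₁ + 2 ^ (max F 0) * C₂) * ((N : ℝ) + 1) ^ G := by ring

private lemma Iic_last_eq_univ (s : ℕ) : Finset.Iic (Fin.last s) = Finset.univ := by
  ext i
  simp [Fin.le_last]

private lemma Iic_castSucc_eq {s : ℕ} (j : Fin s) :
    Finset.Iic (Fin.castSucc j) = (Finset.Iic j).map Fin.castSuccEmb := by
  ext i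
  simp only [Finset.mem_Iic, Finset.mem_map]
  constructor
  · intro hi
    have hi' : i.1 ≤ j.1 := hi
    refine ⟨⟨i.1, lt_of_le_of_lt hi' j.2⟩, ?_, ?_⟩
    · exact hi'
    · simp [Fin.castSuccEmb, Fin.ext_iff]
  · rintro ⟨a, ha, rfl⟩
    have : a.1 ≤ j.1 := ha
    exact this

/-- The product appearing in the multiple series. -/
private noncomputable def trm (s : ℕ) (E F : ℕ → ℝ) (k : Fin s → ℕ) : ℝ :=
  ∏ j : Fin s, ((k j : ℝ) + 1) ^ (E (j.1+1)) *
    ((∑ i ∈ Finset.Iic j, (k i : ℝ)) + 1) ^ (F (j.1+1))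

private lemma trm_nonneg (s : ℕ) (E F : ℕ → ℝ) (k : Fin s → ℕ) : 0 ≤ trm s E F k :=
  Finset.prod_nonneg fun j _ =>
    mul_nonneg (Real.rpow_nonneg (by positivity) _) (Real.rpow_nonneg (by positivity) _)

private lemma trm_snoc (s : ℕ) (E F : ℕ → ℝ) (k : Fin s → ℕ) (n : ℕ) :
    trm (s+1) E F (Fin.snoc k n) = trm s E F k *
      (((n : ℝ) + 1) ^ (E (s+1)) *
        ((∑ i : Fin s, (k i : ℝ)) + (n : ℝ) + 1) ^ (F (s+1))) := by
  unfold trm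
  rw [Fin.prod_univ_castSucc]
  congr 1
  · refine Finset.prod_congr rfl fun j _ => ?_
    have hsum : ∑ i ∈ Finset.Iic (Fin.castSucc j), ((Fin.snoc k n : Fin (s+1) → ℕ) i : ℝ)
        = ∑ i ∈ Finset.Iic j, (k i : ℝ) := by
      rw [Iic_castSucc_eq, Finset.sum_map]
      refine Finset.sum_congr rfl fun i _ => ?_
      simp only [Fin.coe_castSuccEmb, Fin.snoc_castSucc]
    rw [hsum, Fin.snoc_castSucc, Fin.coe_castSucc]
  · rw [Iic_last_eq_univ]
    have h1 : ∑ i : Fin (s+1), ((Fin.snoc k n : Fin (s+1) → ℕ) i : ℝ)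
        = (∑ i : Fin s, (k i : ℝ)) + (n : ℝ) := by
      rw [Fin.sum_univ_castSucc]
      simp [Fin.snoc_castSucc, Fin.snoc_last]
    simp only [Fin.snoc_last, Fin.val_last]
    rw [h1]

private lemma trm_update (s : ℕ) (E F : ℕ → ℝ) (G : ℝ) (k : Fin s → ℕ) :
    trm s E (fun j => if j = s then F j + G else F j) k
      = trm s E F k * ((∑ i : Fin s, (k i : ℝ)) + 1) ^ G := by
  rcases s with _ | t
  · simp [trm]
  · unfold trm
    rw [Fin.prod_univ_castSucc, Fin.prod_univ_castSucc]
    have hc : ∀ j : Fin t, (Fin.castSucc j).1 + 1 ≠ t + 1 := by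
      intro j
      have := j.2
      simp only [Fin.coe_castSucc]
      omega
    have hmain : (∏ j : Fin t, ((k (Fin.castSucc j) : ℝ) + 1) ^ (E ((Fin.castSucc j).1 + 1)) *
          ((∑ i ∈ Finset.Iic (Fin.castSucc j), (k i : ℝ)) + 1) ^
            ((fun j' => if j' = t + 1 then F j' + G else F j') ((Fin.castSucc j).1 + 1)))
        = ∏ j : Fin t, ((k (Fin.castSucc j) : ℝ) + 1) ^ (E ((Fin.castSucc j).1 + 1)) *
          ((∑ i ∈ Finset.Iic (Fin.castSucc j), (k i : ℝ)) + 1) ^ (F ((Fin.castSucc j).1 + 1)) := by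
      refine Finset.prod_congr rfl fun j _ => ?_
      simp only [if_neg (hc j)]
    rw [hmain]
    rw [Iic_last_eq_univ]
    simp only [Fin.val_last, eq_self_iff_true, if_true]
    have hpos : (0:ℝ) < (∑ i : Fin (t+1), (k i : ℝ)) + 1 := by positivity
    rw [Real.rpow_add hpos]
    ring

private def snocE (s : ℕ) : ((Fin s → ℕ) × ℕ) ≃ (Fin (s+1) → ℕ) where
  toFun p := Fin.snoc p.1 p.2
  invFun k := (Fin.init k, k (Fin.last s))
  left_inv p := by simp
  right_inv k := by simp

private lemma main_aux : ∀ s : ℕ, ∀ E F : ℕ → ℝ,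
    (∀ r : ℕ, 1 ≤ r → r ≤ s →
      E r + F r + 1 + ∑ j ∈ Finset.Icc (r+1) s, max (F j) (E j + F j + 1) < 0) →
    Summable (trm s E F)
  | 0, E, F, _ => Summable.of_finite
  | (s+1), E, F, h => by
    have h1 : E (s+1) + F (s+1) + 1 < 0 := by
      have h0 := h (s+1) (by omega) le_rfl
      rw [Finset.Icc_eq_empty (by omega), Finset.sum_empty, add_zero] at h0
      exact h0
    obtain ⟨ε, hε0, hεr⟩ : ∃ ε : ℝ, 0 < ε ∧ ∀ r, 1 ≤ r → r ≤ s+1 →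
        E r + F r + 1 + (∑ j ∈ Finset.Icc (r+1) (s+1), max (F j) (E j + F j + 1)) + ε < 0 := by
      have hne : (Finset.Icc 1 (s+1)).Nonempty := ⟨1, by simp⟩
      set δ := (Finset.Icc 1 (s+1)).inf' hne
        (fun r => -(E r + F r + 1 + ∑ j ∈ Finset.Icc (r+1) (s+1), max (F j) (E j + F j + 1)))
        with hδdef
      have hδ0 : 0 < δ := by
        rw [hδdef, Finset.lt_inf'_iff]
        intro r hr
        rw [Finset.mem_Icc] at hr
        have := h r hr.1 hr.2
        linarith
      refine ⟨δ/2, by linarith, fun r h1r hr2 => ?_⟩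
      have hle : δ ≤ -(E r + F r + 1 +
          ∑ j ∈ Finset.Icc (r+1) (s+1), max (F j) (E j + F j + 1)) :=
        Finset.inf'_le _ (Finset.mem_Icc.2 ⟨h1r, hr2⟩)
      linarith
    set G : ℝ := max (F (s+1)) (E (s+1) + F (s+1) + 1) + ε with hG
    have hGF : F (s+1) < G := by
      have := le_max_left (F (s+1)) (E (s+1) + F (s+1) + 1)
      linarith [hG]
    have hGE : E (s+1) + F (s+1) + 1 < G := by
      have := le_max_right (F (s+1)) (E (s+1) + F (s+1) + 1)
      linarith [hG]
    obtain ⟨C, hC0, hCb⟩ := key_bound h1 hGF hGE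
    set F' : ℕ → ℝ := fun j => if j = s then F j + G else F j with hF'
    have h' : ∀ r : ℕ, 1 ≤ r → r ≤ s →
        E r + F' r + 1 + ∑ j ∈ Finset.Icc (r+1) s, max (F' j) (E j + F' j + 1) < 0 := by
      intro r h1r hrs
      rcases eq_or_lt_of_le hrs with rfl | hlt
      · rw [Finset.Icc_eq_empty (by omega), Finset.sum_empty, add_zero]
        have hεs := hεr r h1r (by omega)
        rw [Finset.Icc_self, Finset.sum_singleton] at hεs
        have hFr : F' r = F r + G := by
          simp only [hF', eq_self_iff_true, if_true]
        rw [hFr]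
        linarith [hG]
      · have hmem : s ∈ Finset.Icc (r+1) s := Finset.mem_Icc.2 ⟨by omega, le_rfl⟩
        have hFr : F' r = F r := by
          simp only [hF']
          rw [if_neg (by omega : r ≠ s)]
        have hsplit : ∑ j ∈ Finset.Icc (r+1) s, max (F' j) (E j + F' j + 1)
            = (max (F s) (E s + F s + 1) + G) +
              ∑ j ∈ (Finset.Icc (r+1) s).erase s, max (F j) (E j + F j + 1) := by
          rw [← Finset.add_sum_erase _ _ hmem]
          congr 1
          · simp only [hF', eq_self_iff_true, if_true]
            have he : E s + (F s + G) + 1 = (E s + F s + 1) + G := by ring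
            rw [he, max_add_add_right]
          · refine Finset.sum_congr rfl fun j hj => ?_
            have hjne : j ≠ s := (Finset.mem_erase.1 hj).1
            simp only [hF']
            rw [if_neg hjne]
        have hsplit2 : ∑ j ∈ Finset.Icc (r+1) s, max (F j) (E j + F j + 1)
            = max (F s) (E s + F s + 1) +
              ∑ j ∈ (Finset.Icc (r+1) s).erase s, max (F j) (E j + F j + 1) :=
          (Finset.add_sum_erase _ _ hmem).symm
        have hεs := hεr r h1r (by omega)
        have htop : ∑ j ∈ Finset.Icc (r+1) (s+1), max (F j) (E j + F j + 1)
            = (∑ j ∈ Finset.Icc (r+1) s, max (F j) (E j + F j + 1)) +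
              max (F (s+1)) (E (s+1) + F (s+1) + 1) :=
          Finset.sum_Icc_succ_top (by omega) _
        rw [hFr, hsplit]
        rw [htop, hsplit2] at hεs
        linarith [hG]
    have IH := main_aux s E F' h'
    rw [← Equiv.summable_iff (snocE s)]
    have hcomp : (trm (s+1) E F ∘ (snocE s)) = fun p : (Fin s → ℕ) × ℕ =>
        trm s E F p.1 * (((p.2 : ℝ) + 1) ^ (E (s+1)) *
          (((∑ i : Fin s, p.1 i : ℕ) : ℝ) + (p.2 : ℝ) + 1) ^ (F (s+1))) := by
      funext p
      show trm (s+1) E F (Fin.snoc p.1 p.2) = _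
      rw [trm_snoc]
      push_cast
      ring_nf
    rw [hcomp]
    have hnn : ∀ p : (Fin s → ℕ) × ℕ, 0 ≤ trm s E F p.1 * (((p.2 : ℝ) + 1) ^ (E (s+1)) *
          (((∑ i : Fin s, p.1 i : ℕ) : ℝ) + (p.2 : ℝ) + 1) ^ (F (s+1))) := fun p =>
      mul_nonneg (trm_nonneg _ _ _ _) (mul_nonneg (Real.rpow_nonneg (by positivity) _)
        (Real.rpow_nonneg (by positivity) _))
    rw [summable_prod_of_nonneg hnn]
    constructor
    · intro k
      exact (key_summable h1 (∑ i, k i)).mul_left (trm s E F k)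
    · refine Summable.of_nonneg_of_le (fun k => tsum_nonneg fun n => hnn (k, n))
        (fun k => ?_) (IH.mul_left C)
      show (∑' n : ℕ, trm s E F k * (((n : ℝ) + 1) ^ (E (s+1)) *
        (((∑ i : Fin s, k i : ℕ) : ℝ) + (n : ℝ) + 1) ^ (F (s+1)))) ≤ C * trm s E F' k
      rw [tsum_mul_left]
      have hb := hCb (∑ i, k i)
      calc trm s E F k * (∑' n : ℕ, ((n : ℝ) + 1) ^ (E (s+1)) *
            (((∑ i : Fin s, k i : ℕ) : ℝ) + (n : ℝ) + 1) ^ (F (s+1)))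
          ≤ trm s E F k * (C * (((∑ i : Fin s, k i : ℕ) : ℝ) + 1) ^ G) :=
            mul_le_mul_of_nonneg_left hb (trm_nonneg _ _ _ _)
        _ = C * (trm s E F k * (((∑ i : Fin s, k i : ℕ) : ℝ) + 1) ^ G) := by ring
        _ = C * trm s E F' k := by
            have hc : ((∑ i : Fin s, k i : ℕ) : ℝ) = ∑ i : Fin s, (k i : ℝ) := by
              push_cast
              rfl
            rw [hc, ← trm_update, hF']



/-- convergence of the multiple series
`∑_{k₁,…,k_s ≥ 0} ∏_j (k_j+1)^{E_j} (k₁+⋯+k_j+1)^{F_j}`.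
Here the maximum of the sum-set `Z_{r+1} + ⋯ + Z_s`, where `Z_j = {F_j, E_j+F_j+1}`,
equals `∑_{j=r+1}^{s} max (F j) (E j + F j + 1)`, which is how it is written below. -/
theorem multisum_convergence (s : ℕ) (hs : 1 ≤ s) (E F : ℕ → ℝ)
    (h : ∀ r : ℕ, 1 ≤ r → r ≤ s →
      E r + F r + 1 + ∑ j ∈ Finset.Icc (r+1) s, max (F j) (E j + F j + 1) < 0) :
    Summable (fun k : Fin s → ℕ =>
      ∏ j : Fin s, ((k j : ℝ) + 1) ^ (E (j.1+1)) *
        ((∑ i ∈ Finset.Iic j, (k i : ℝ)) + 1) ^ (F (j.1+1))) :=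
  main_aux s E F h
end

section
/- If the condition of the previous convergence criterion fails for some r, i.e. E_r + F_r + 1 + max(Z_{r+1} + ⋯ + Z_s) ≥ 0 for some r ∈ {1,…,s}, then the subsum ∑_{k_r,…,k_s ≥ 0} ∏_{j=1}^{s} (k_j + 1)^{E_j} (k₁ + ⋯ + k_j + 1)^{F_j} (with k₁,…,k_{r−1} fixed, e.g. all zero) diverges; hence the conditions E_r + F_r + 1 + max(Z_{r+1}+⋯+Z_s) < 0 for all r = 1,…,s exactly describe the domain of convergence of the multiple series. -/
/-!
Fix the coordinate `k_m` (`m = r - 1`) to the value `n`, the earlier coordinates to `0`, and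
let the later ones range over `[0, n]`. On this layer every partial sum `k₀ + ⋯ + k_j` with
`j ≥ m` lies in `[n, s n]`, so the summand dominates a product of one-variable factors, and since
`∑_{k ≤ n} (k + 1) ^ e ≳ (n + 1) ^ max 0 (e + 1)` the sum over the layer is
`≳ (n + 1) ^ (E_r + F_r + ∑_{j > r} max (F_j) (E_j + F_j + 1)) ≥ (n + 1)⁻¹`.
The layers are disjoint, so a convergent series would make the harmonic series converge.
-/

open MeasureTheory

open Finset Filter Asymptotics Function
open Fintype (piFinset)

theorem Summable.sum_finset_of_pairwise_disjoint {α ι E : Type*} [NormedAddCommGroup E]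
    [CompleteSpace E] {f : α → E} (hf : Summable f) {B : ι → Finset α}
    (hB : Pairwise (Disjoint on B)) : Summable fun i ↦ ∑ x ∈ B i, f x := by
  have hinj : Injective fun p : Σ n, B n ↦ (p.2 : α) := by
    rintro ⟨n, x, hx⟩ ⟨n', x', hx'⟩ (rfl : x = x')
    obtain rfl : n = n' := by
      by_contra hne
      exact disjoint_left.1 (hB hne) hx hx'
    rfl
  simpa [Finset.sum_attach] using (hf.comp_injective hinj).sigma

theorem Real.rpow_neg_abs_mul_rpow_le_rpow {c x y : ℝ} (a : ℝ) (hc : 1 ≤ c) (hy : 0 < y)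
    (hyx : y ≤ x) (hxc : x ≤ c * y) : c ^ (-|a|) * y ^ a ≤ x ^ a := by
  rcases le_or_gt 0 a with ha | ha
  · rw [abs_of_nonneg ha]
    calc c ^ (-a) * y ^ a ≤ 1 * y ^ a := by
          gcongr
          exact Real.rpow_le_one_of_one_le_of_nonpos hc (by linarith)
      _ ≤ x ^ a := by rw [one_mul]; gcongr
  · rw [abs_of_neg ha, neg_neg, ← Real.mul_rpow (by linarith) hy.le]
    exact Real.rpow_le_rpow_of_nonpos (hy.trans_le hyx) hxc ha.le

theorem isBigO_rpow_sum_range_rpow (e : ℝ) :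
    (fun n : ℕ ↦ ((n : ℝ) + 1) ^ max 0 (e + 1)) =O[atTop]
      fun n ↦ ∑ k ∈ range (n + 1), ((k : ℝ) + 1) ^ e := by
  have hterm : ∀ k : ℕ, 0 ≤ ((k : ℝ) + 1) ^ e := fun k ↦ by positivity
  have hsum_nonneg : ∀ n, 0 ≤ ∑ k ∈ range (n + 1), ((k : ℝ) + 1) ^ e :=
    fun n ↦ sum_nonneg fun k _ ↦ hterm k
  rcases le_or_gt (e + 1) 0 with he | he
  · refine isBigO_of_le _ fun n ↦ ?_
    rw [max_eq_left he, Real.rpow_zero, Real.norm_of_nonneg (hsum_nonneg n), norm_one]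
    calc (1 : ℝ) = ((0 : ℕ) + 1) ^ e := by simp
      _ ≤ _ := single_le_sum (fun k _ ↦ hterm k) (mem_range.2 n.succ_pos)
  rw [max_eq_right he.le]
  rcases le_or_gt e 0 with he0 | he0
  · refine isBigO_of_le _ fun n ↦ ?_
    rw [Real.norm_of_nonneg (by positivity), Real.norm_of_nonneg (hsum_nonneg n),
      Real.rpow_add_one (by positivity)]
    calc ((n : ℝ) + 1) ^ e * ((n : ℝ) + 1) = ∑ _k ∈ range (n + 1), ((n : ℝ) + 1) ^ e := by
          simp [mul_comm]
      _ ≤ _ := sum_le_sum fun k hk ↦ Real.rpow_le_rpow_of_nonpos (by positivity)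
          (by simpa using (mem_range_succ_iff.1 hk : k ≤ n)) he0
  · -- comparison with `∫₀ⁿ⁺¹ x ^ e dx = (n + 1) ^ (e + 1) / (e + 1)`
    refine isBigO_of_le' (c := e + 1) _ fun n ↦ ?_
    rw [Real.norm_of_nonneg (by positivity), Real.norm_of_nonneg (hsum_nonneg n)]
    have hmono : MonotoneOn (fun x : ℝ ↦ x ^ e) (Set.Icc 0 (0 + ((n + 1 : ℕ) : ℝ))) :=
      fun x hx y _ hxy ↦ Real.rpow_le_rpow hx.1 hxy he0.le
    have := hmono.integral_le_sum
    rw [integral_rpow (Or.inl (by linarith)), Real.zero_rpow he.ne'] at this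
    push_cast at this
    simp only [zero_add, sub_zero] at this
    rw [div_le_iff₀ he] at this
    linarith

lemma not_summable_rpow_neg_one_nat_succ :
    ¬ Summable fun n : ℕ ↦ ((n : ℝ) + 1) ^ (-1 : ℝ) := by
  have := (summable_nat_add_iff (f := fun n : ℕ ↦ (n : ℝ) ^ (-1 : ℝ)) 1).not.2
    (by simp [Real.summable_nat_rpow])
  simpa using this

section multisum

variable {s : ℕ}

noncomputable def multisumTerm (e f : Fin s → ℝ) (k : Fin s → ℕ) : ℝ :=
  ∏ j, ((k j : ℝ) + 1) ^ e j * ((∑ i ∈ Iic j, (k i : ℝ)) + 1) ^ f j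

def layer (m : Fin s) (n : ℕ) (j : Fin s) : Finset ℕ :=
  if j < m then {0} else if j = m then {n} else range (n + 1)

section layer

variable {m : Fin s} {n : ℕ} {k : Fin s → ℕ}

lemma apply_self_of_mem_layer (hk : k ∈ piFinset (layer m n)) : k m = n := by
  simpa [layer] using Fintype.mem_piFinset.1 hk m

lemma apply_eq_zero_of_mem_layer (hk : k ∈ piFinset (layer m n)) {j : Fin s} (hj : j < m) :
    k j = 0 := by
  simpa [layer, hj] using Fintype.mem_piFinset.1 hk j

lemma apply_le_of_mem_layer (hk : k ∈ piFinset (layer m n)) (j : Fin s) : k j ≤ n := by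
  have := Fintype.mem_piFinset.1 hk j
  unfold layer at this
  split_ifs at this <;> simp_all

lemma pairwise_disjoint_layer : Pairwise (Disjoint on fun n ↦ piFinset (layer m n)) :=
  fun _ _ hne ↦ Finset.disjoint_left.2 fun _ hk hk' ↦
    hne ((apply_self_of_mem_layer hk).symm.trans (apply_self_of_mem_layer hk'))

lemma sum_Iic_eq_zero_of_mem_layer (hk : k ∈ piFinset (layer m n)) {j : Fin s} (hj : j < m) :
    ∑ i ∈ Iic j, k i = 0 :=
  sum_eq_zero fun _ hi ↦ apply_eq_zero_of_mem_layer hk ((mem_Iic.1 hi).trans_lt hj)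

lemma le_sum_Iic_of_mem_layer (hk : k ∈ piFinset (layer m n)) {j : Fin s} (hj : m ≤ j) :
    n ≤ ∑ i ∈ Iic j, k i :=
  apply_self_of_mem_layer hk ▸ single_le_sum (fun _ _ ↦ Nat.zero_le _) (mem_Iic.2 hj)

lemma sum_Iic_le_of_mem_layer (hk : k ∈ piFinset (layer m n)) (j : Fin s) :
    ∑ i ∈ Iic j, k i ≤ s * n :=
  calc ∑ i ∈ Iic j, k i ≤ #(Iic j) • n :=
        sum_le_card_nsmul _ _ _ fun i _ ↦ apply_le_of_mem_layer hk i
    _ ≤ s * n := by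
      rw [smul_eq_mul]
      exact Nat.mul_le_mul_right n ((card_le_univ _).trans_eq (Fintype.card_fin s))

end layer

noncomputable def layerWeight (m : Fin s) (f : Fin s → ℝ) (n : ℕ) (j : Fin s) : ℝ :=
  if m ≤ j then (s : ℝ) ^ (-|f j|) * ((n : ℝ) + 1) ^ f j else 1

noncomputable def layerFactor (m : Fin s) (e f : Fin s → ℝ) (n : ℕ) (j : Fin s) : ℝ :=
  layerWeight m f n j * ∑ x ∈ layer m n j, ((x : ℝ) + 1) ^ e j

section layerFactor

variable {m : Fin s} {e f : Fin s → ℝ} {n : ℕ} {k : Fin s → ℕ}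

lemma layerWeight_nonneg (j : Fin s) : 0 ≤ layerWeight m f n j := by
  unfold layerWeight; split_ifs <;> positivity

lemma layerFactor_nonneg (j : Fin s) : 0 ≤ layerFactor m e f n j :=
  mul_nonneg (layerWeight_nonneg j) (sum_nonneg fun _ _ ↦ by positivity)

lemma layerWeight_le (hk : k ∈ piFinset (layer m n)) (j : Fin s) :
    layerWeight m f n j ≤ ((∑ i ∈ Iic j, (k i : ℝ)) + 1) ^ f j := by
  unfold layerWeight
  split_ifs with hj
  · have hs : (1 : ℝ) ≤ s := Nat.one_le_cast.2 m.pos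
    have hlow : (n : ℝ) ≤ ∑ i ∈ Iic j, (k i : ℝ) := mod_cast le_sum_Iic_of_mem_layer hk hj
    have hup : ∑ i ∈ Iic j, (k i : ℝ) ≤ s * n := mod_cast sum_Iic_le_of_mem_layer hk j
    exact Real.rpow_neg_abs_mul_rpow_le_rpow _ hs (by positivity) (by linarith) (by nlinarith)
  · rw [← Nat.cast_sum, sum_Iic_eq_zero_of_mem_layer hk (not_le.1 hj)]
    simp

lemma prod_layerWeight_mul_le_multisumTerm (hk : k ∈ piFinset (layer m n)) :
    ∏ j, layerWeight m f n j * ((k j : ℝ) + 1) ^ e j ≤ multisumTerm e f k := by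
  refine prod_le_prod (fun j _ ↦ mul_nonneg (layerWeight_nonneg j) (by positivity))
    fun j _ ↦ ?_
  rw [mul_comm]
  exact mul_le_mul_of_nonneg_left (layerWeight_le hk j) (by positivity)

lemma prod_layerFactor_le_sum_multisumTerm :
    ∏ j, layerFactor m e f n j ≤ ∑ k ∈ piFinset (layer m n), multisumTerm e f k :=
  calc ∏ j, layerFactor m e f n j
      = ∑ k ∈ piFinset (layer m n), ∏ j, layerWeight m f n j * ((k j : ℝ) + 1) ^ e j := by
        simp only [layerFactor, mul_sum, prod_univ_sum]
    _ ≤ _ := sum_le_sum fun _ hk ↦ prod_layerWeight_mul_le_multisumTerm hk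

lemma layerFactor_of_lt {j : Fin s} (hj : j < m) : layerFactor m e f n j = 1 := by
  simp [layerFactor, layerWeight, layer, hj, not_le.2 hj]

lemma prod_layerFactor_eq :
    ∏ j, layerFactor m e f n j =
      layerFactor m e f n m * ∏ j ∈ Ioi m, layerFactor m e f n j := by
  rw [← prod_insert notMem_Ioi_self, Ioi_insert]
  exact (prod_subset (subset_univ _) fun j _ hj ↦
    layerFactor_of_lt (not_le.1 fun h ↦ hj (mem_Ici.2 h))).symm

lemma isBigO_layerFactor_self :
    (fun n : ℕ ↦ ((n : ℝ) + 1) ^ (e m + f m)) =O[atTop] fun n ↦ layerFactor m e f n m := by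
  refine (isBigO_self_const_mul (c := (s : ℝ) ^ (-|f m|))
    (Real.rpow_pos_of_pos (mod_cast m.pos) _).ne' _ _).congr_right fun n ↦ ?_
  simp only [layerFactor, layerWeight, layer, le_refl, lt_irrefl, if_true, if_false,
    sum_singleton]
  rw [Real.rpow_add (by positivity)]
  ring

lemma isBigO_layerFactor_of_lt {j : Fin s} (hj : m < j) :
    (fun n : ℕ ↦ ((n : ℝ) + 1) ^ max (f j) (e j + f j + 1)) =O[atTop]
      fun n ↦ layerFactor m e f n j := by
  have hweight := isBigO_self_const_mul (c := (s : ℝ) ^ (-|f j|))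
    (Real.rpow_pos_of_pos (mod_cast m.pos) _).ne'
    (fun n : ℕ ↦ ((n : ℝ) + 1) ^ f j) atTop
  refine (hweight.mul (isBigO_rpow_sum_range_rpow (e j))).congr (fun n ↦ ?_) fun n ↦ ?_
  · rw [← Real.rpow_add (by positivity), ← max_add_add_left]
    ring_nf
  · simp [layerFactor, layerWeight, layer, hj.le, hj.ne', not_lt.2 hj.le, mul_assoc]

end layerFactor

theorem not_summable_multisumTerm (m : Fin s) (e f : Fin s → ℝ)
    (h : 0 ≤ e m + f m + 1 + ∑ j ∈ Ioi m, max (f j) (e j + f j + 1)) :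
    ¬ Summable fun k : {k : Fin s → ℕ // ∀ i < m, k i = 0} ↦ multisumTerm e f k.1 := by
  intro hsum
  have hlayers : Summable fun n ↦ ∑ k ∈ piFinset (layer m n), multisumTerm e f k := by
    have hind : Summable ({k | ∀ i < m, k i = 0}.indicator (multisumTerm e f)) :=
      summable_subtype_iff_indicator.1 hsum
    refine (hind.sum_finset_of_pairwise_disjoint pairwise_disjoint_layer).congr
      fun n ↦ sum_congr rfl fun k hk ↦ ?_
    exact Set.indicator_of_mem (Set.mem_ofPred.2 fun _ hi ↦ apply_eq_zero_of_mem_layer hk hi) _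
  refine not_summable_rpow_neg_one_nat_succ (summable_of_isBigO_nat hlayers ?_)
  calc (fun n : ℕ ↦ ((n : ℝ) + 1) ^ (-1 : ℝ))
      =O[atTop] fun n : ℕ ↦
          ((n : ℝ) + 1) ^ (e m + f m + ∑ j ∈ Ioi m, max (f j) (e j + f j + 1)) :=
        isBigO_of_le _ fun n ↦ by
          rw [Real.norm_of_nonneg (by positivity), Real.norm_of_nonneg (by positivity)]
          exact Real.rpow_le_rpow_of_exponent_le (by linarith [n.cast_nonneg (α := ℝ)])
            (by linarith)
    _ = fun n : ℕ ↦ ((n : ℝ) + 1) ^ (e m + f m) *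
          ∏ j ∈ Ioi m, ((n : ℝ) + 1) ^ max (f j) (e j + f j + 1) := by
        ext n
        rw [Real.rpow_add (by positivity), Real.rpow_sum_of_pos (by positivity)]
    _ =O[atTop] fun n ↦ layerFactor m e f n m * ∏ j ∈ Ioi m, layerFactor m e f n j :=
        isBigO_layerFactor_self.mul
          (IsBigO.finsetProd fun j hj ↦ isBigO_layerFactor_of_lt (mem_Ioi.1 hj))
    _ =O[atTop] fun n ↦ ∑ k ∈ piFinset (layer m n), multisumTerm e f k :=
        isBigO_of_le _ fun n ↦ by
          rw [← prod_layerFactor_eq,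
            Real.norm_of_nonneg (prod_nonneg fun j _ ↦ layerFactor_nonneg j)]
          exact prod_layerFactor_le_sum_multisumTerm.trans (le_abs_self _)

end multisum

/-- `max (Z_{r+1} + ⋯ + Z_s)` is written as `∑_{j=r+1}^{s} max (F j) (E j + F j + 1)`:
the maximum of a sum-set is the sum of the maxima. -/
theorem multisum_divergence_general (s : ℕ) (E F : ℕ → ℝ)
    (r : ℕ) (hr1 : 1 ≤ r) (hrs : r ≤ s)
    (h : 0 ≤ E r + F r + 1 + ∑ j ∈ Finset.Icc (r+1) s, max (F j) (E j + F j + 1)) :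
    ¬ Summable (fun k : {k : Fin s → ℕ // ∀ i : Fin s, i.1 + 1 < r → k i = 0} =>
      ∏ j : Fin s, ((k.1 j : ℝ) + 1) ^ (E (j.1+1)) *
        ((∑ i ∈ Finset.Iic j, (k.1 i : ℝ)) + 1) ^ (F (j.1+1))) := by
  set m : Fin s := ⟨r - 1, by omega⟩
  have hm : (m : ℕ) + 1 = r := Nat.sub_add_cancel hr1
  have hzero : (fun k : Fin s → ℕ ↦ ∀ i : Fin s, i.1 + 1 < r → k i = 0) =
      fun k ↦ ∀ i < m, k i = 0 := by
    simp only [Fin.lt_def, ← hm, Nat.add_lt_add_iff_right]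
  have hIcc : Icc (r + 1) s = ((Ioi m).map Fin.valEmbedding).map (addRightEmbedding 1) := by
    rw [Fin.map_valEmbedding_Ioi, map_add_right_Ioo, hm]
    ext; simp only [mem_Icc, mem_Ioo]; omega
  rw [hzero]
  refine not_summable_multisumTerm m (fun j ↦ E (j.1 + 1)) (fun j ↦ F (j.1 + 1)) ?_
  simpa only [hm, hIcc, sum_map, addRightEmbedding_apply, Fin.valEmbedding_apply] using h

/-- if the convergence condition fails for some `r`, then the subsum with
`k₁, …, k_{r-1}` fixed to zero diverges (is not summable). As in Statement 2, the maximum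
of the sum-set `Z_{r+1} + ⋯ + Z_s` is written as `∑_{j=r+1}^{s} max (F j) (E j + F j + 1)`. -/
theorem multisum_divergence (s : ℕ) (hs : 1 ≤ s) (E F : ℕ → ℝ)
    (r : ℕ) (hr1 : 1 ≤ r) (hrs : r ≤ s)
    (h : 0 ≤ E r + F r + 1 + ∑ j ∈ Finset.Icc (r+1) s, max (F j) (E j + F j + 1)) :
    ¬ Summable (fun k : {k : Fin s → ℕ // ∀ i : Fin s, i.1 + 1 < r → k i = 0} =>
      ∏ j : Fin s, ((k.1 j : ℝ) + 1) ^ (E (j.1+1)) *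
        ((∑ i ∈ Finset.Iic j, (k.1 i : ℝ)) + 1) ^ (F (j.1+1))) :=
  multisum_divergence_general s E F r hr1 hrs h
end

section
/- Let m ≥ 2 and let a₀,…,a_m, b₁,…,b_m be complex numbers with Re(b_i) > Re(a_i) > 0 for i = 1,…,m and Re(b₁ − a₁) ≥ Re(a₀). Then the multiple integral J_m = ∫_{[0,1]^m} (∏_{i=1}^m x_i^{a_i−1}(1−x_i)^{b_i−a_i−1}) / (1 − (1 − (⋯(1 − x_m)x_{m−1}⋯))x₁)^{a₀} dx₁⋯dx_m converges absolutely. -/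
open MeasureTheory

/-!
Write `Q = nestR (x₀ :: x₁ :: r)`. On the open cube `0 < Q ≤ 1`, `Q ≥ 1 - x₀`, and expanding the
recursion twice gives `Q ≥ x₁ ∏ (1 - rᵢ) ≥ ∏ xᵢ ∏_{i ≥ 1} (1 - xᵢ)` (this needs `m ≥ 2`).
Splitting `Re a₀ ≤ s + t` with `t > 0` small and `s < Re (b₁ - a₁)`, the factor `Q ^ (-Re a₀)` is
bounded by `(1 - x₀) ^ (-s)` times the `t`-th negative power of the second bound, so the modulus of
the integrand is dominated by a product of one-dimensional Beta densities with positive parameters.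
The room `t > 0` is what handles the borderline case `Re a₀ = Re (b₁ - a₁)`.
-/

open Set

-- Also true for `[]`, since `[].headI = 0`.
lemma nestR_eq_one_sub_nestR_tail_mul_headI (l : List ℝ) :
    nestR l = 1 - nestR l.tail * l.headI := by
  cases l with
  | nil => simp [nestR, show (default : ℝ) = 0 from rfl]
  | cons t r => rfl

lemma nestR_mem_Icc {l : List ℝ} (hl : ∀ t ∈ l, t ∈ Icc (0:ℝ) 1) : nestR l ∈ Icc 0 1 := by
  induction l with
  | nil => simp [nestR]
  | cons t r ih =>
    obtain ⟨ht0, ht1⟩ := hl t List.mem_cons_self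
    obtain ⟨hr0, hr1⟩ := ih fun u hu => hl u (List.mem_cons_of_mem _ hu)
    constructor <;> simp only [nestR] <;> nlinarith

lemma prod_one_sub_le_nestR {l : List ℝ} (hl : ∀ t ∈ l, t ∈ Icc (0:ℝ) 1) :
    (l.map (1 - ·)).prod ≤ nestR l := by
  induction l with
  | nil => simp [nestR]
  | cons t r ih =>
    have hr : ∀ u ∈ r, u ∈ Icc (0:ℝ) 1 := fun u hu => hl u (List.mem_cons_of_mem _ hu)
    obtain ⟨ht0, ht1⟩ := hl t List.mem_cons_self
    have hN := (nestR_mem_Icc hr).2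
    simp only [List.map_cons, List.prod_cons, nestR]
    nlinarith [ih hr]

lemma one_sub_le_nestR_cons {t : ℝ} {r : List ℝ} (ht : 0 ≤ t)
    (hr : ∀ u ∈ r, u ∈ Icc (0:ℝ) 1) : 1 - t ≤ nestR (t :: r) := by
  have hN := (nestR_mem_Icc hr).2
  simp only [nestR]
  nlinarith

lemma mul_prod_one_sub_le_nestR_cons_cons {s t : ℝ} {r : List ℝ} (hs : s ≤ 1)
    (ht : t ∈ Icc (0:ℝ) 1) (hr : ∀ u ∈ r, u ∈ Icc (0:ℝ) 1) :
    t * (r.map (1 - ·)).prod ≤ nestR (s :: t :: r) := by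
  obtain ⟨hN0, hN1⟩ := nestR_mem_Icc hr
  have hP := prod_one_sub_le_nestR hr
  have hNt : nestR r * t ≤ 1 := mul_le_one₀ hN1 ht.1 ht.2
  simp only [nestR]
  nlinarith [mul_nonneg (sub_nonneg.2 hNt) (sub_nonneg.2 hs), mul_le_mul_of_nonneg_left hP ht.1]

lemma continuous_nestR_ofFn (m : ℕ) : Continuous fun x : Fin m → ℝ => nestR (List.ofFn x) := by
  induction m with
  | zero => simpa [nestR] using continuous_const
  | succ n ih =>
    simp only [List.ofFn_succ, nestR]
    exact continuous_const.sub
      ((ih.comp (continuous_pi fun i => continuous_apply i.succ)).mul (continuous_apply 0))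

lemma one_sub_le_nestR_ofFn {n : ℕ} {x : Fin (n+1) → ℝ} (hx : ∀ i, x i ∈ Icc (0:ℝ) 1) :
    1 - x 0 ≤ nestR (List.ofFn x) := by
  rw [List.ofFn_succ]
  exact one_sub_le_nestR_cons (hx 0).1 (List.forall_mem_ofFn_iff.2 fun i => hx i.succ)

lemma nestR_ofFn_pos {n : ℕ} {x : Fin (n+1) → ℝ} (hx : ∀ i, x i ∈ Ioo (0:ℝ) 1) :
    0 < nestR (List.ofFn x) :=
  (sub_pos.2 (hx 0).2).trans_le (one_sub_le_nestR_ofFn fun i => Ioo_subset_Icc_self (hx i))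

lemma prod_mul_prod_one_sub_le_nestR_ofFn {n : ℕ} {x : Fin (n+2) → ℝ}
    (hx : ∀ i, x i ∈ Icc (0:ℝ) 1) :
    (∏ i, x i) * ∏ i : Fin (n+1), (1 - x i.succ) ≤ nestR (List.ofFn x) := by
  have hx0 : ∀ i, 0 ≤ x i := fun i => (hx i).1
  have hx1 : ∀ i, x i ≤ 1 := fun i => (hx i).2
  have key : x 1 * ∏ i : Fin n, (1 - x i.succ.succ) ≤ nestR (List.ofFn x) := by
    have := mul_prod_one_sub_le_nestR_cons_cons (hx1 0) (hx 1)
      (List.forall_mem_ofFn_iff.2 fun i : Fin n => hx i.succ.succ)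
    simpa [List.ofFn_succ, List.map_ofFn, List.prod_ofFn] using this
  have hrest : x 0 * (∏ i : Fin n, x i.succ.succ) * (1 - x 1) ≤ 1 :=
    mul_le_one₀ (mul_le_one₀ (hx1 0) (Finset.prod_nonneg fun i _ => hx0 _)
      (Finset.prod_le_one (fun i _ => hx0 _) fun i _ => hx1 _)) (by linarith [hx1 1])
      (by linarith [hx0 1])
  calc (∏ i, x i) * ∏ i : Fin (n+1), (1 - x i.succ)
      = (x 0 * (∏ i : Fin n, x i.succ.succ) * (1 - x 1)) *
          (x 1 * ∏ i : Fin n, (1 - x i.succ.succ)) := by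
        simp only [Fin.prod_univ_succ, Fin.succ_zero_eq_one]; ring
    _ ≤ 1 * (x 1 * ∏ i : Fin n, (1 - x i.succ.succ)) :=
        mul_le_mul_of_nonneg_right hrest
          (mul_nonneg (hx0 1) (Finset.prod_nonneg fun i _ => by linarith [hx1 i.succ.succ]))
    _ ≤ nestR (List.ofFn x) := by rw [one_mul]; exact key

lemma nestR_ofFn_rpow_neg_le {n : ℕ} {x : Fin (n+2) → ℝ} (hx : ∀ i, x i ∈ Ioo (0:ℝ) 1)
    {c s t : ℝ} (hs : 0 ≤ s) (ht : 0 ≤ t) (hc : c ≤ s + t) :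
    nestR (List.ofFn x) ^ (-c) ≤
      ∏ i, x i ^ (-t) * (1 - x i) ^ (-(Fin.cons s fun _ => t : Fin (n+2) → ℝ) i) := by
  have hx0 : ∀ i, 0 < x i := fun i => (hx i).1
  have hx1 : ∀ i, 0 < 1 - x i := fun i => sub_pos.2 (hx i).2
  have hIcc : ∀ i, x i ∈ Icc (0:ℝ) 1 := fun i => Ioo_subset_Icc_self (hx i)
  set Q := nestR (List.ofFn x)
  have hW0 : 0 < (∏ i, x i) * ∏ i : Fin (n+1), (1 - x i.succ) :=
    mul_pos (Finset.prod_pos fun i _ => hx0 i) (Finset.prod_pos fun i _ => hx1 _)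
  have hQW := prod_mul_prod_one_sub_le_nestR_ofFn hIcc
  have hQ0 : 0 < Q := nestR_ofFn_pos hx
  calc Q ^ (-c)
      ≤ Q ^ (-s) * Q ^ (-t) := by
        rw [← Real.rpow_add hQ0]
        exact Real.rpow_le_rpow_of_exponent_ge hQ0 (nestR_mem_Icc
          (List.forall_mem_ofFn_iff.2 hIcc)).2 (by linarith)
    _ ≤ (1 - x 0) ^ (-s) * ((∏ i, x i) * ∏ i : Fin (n+1), (1 - x i.succ)) ^ (-t) :=
        mul_le_mul
          (Real.rpow_le_rpow_of_nonpos (hx1 0) (one_sub_le_nestR_ofFn hIcc) (by linarith))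
          (Real.rpow_le_rpow_of_nonpos hW0 hQW (by linarith))
          (Real.rpow_nonneg hQ0.le _) (Real.rpow_nonneg (hx1 0).le _)
    _ = ∏ i, x i ^ (-t) * (1 - x i) ^ (-(Fin.cons s fun _ => t : Fin (n+2) → ℝ) i) := by
        rw [Finset.prod_mul_distrib, Fin.prod_univ_succ (fun i => (1 - x i) ^ _),
          Real.mul_rpow (Finset.prod_nonneg fun i _ => (hx0 i).le)
            (Finset.prod_nonneg fun i _ => (hx1 _).le),
          ← Real.finsetProd_rpow _ _ (fun i _ => (hx0 i).le),
          ← Real.finsetProd_rpow _ _ (fun i _ => (hx1 _).le)]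
        simp only [Fin.cons_zero, Fin.cons_succ]
        ring

lemma prod_rpow_mul_nestR_ofFn_rpow_neg_le {n : ℕ} {x : Fin (n+2) → ℝ}
    (hx : ∀ i, x i ∈ Ioo (0:ℝ) 1) (α β : Fin (n+2) → ℝ) {c s t : ℝ} (hs : 0 ≤ s) (ht : 0 ≤ t)
    (hc : c ≤ s + t) :
    (∏ i, x i ^ (α i - 1) * (1 - x i) ^ (β i - 1)) * nestR (List.ofFn x) ^ (-c) ≤
      ∏ i, x i ^ (α i - t - 1) *
        (1 - x i) ^ (β i - (Fin.cons s fun _ => t : Fin (n+2) → ℝ) i - 1) := by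
  have hx0 : ∀ i, 0 < x i := fun i => (hx i).1
  have hx1 : ∀ i, 0 < 1 - x i := fun i => sub_pos.2 (hx i).2
  calc _ ≤ (∏ i, x i ^ (α i - 1) * (1 - x i) ^ (β i - 1)) *
        ∏ i, x i ^ (-t) * (1 - x i) ^ (-(Fin.cons s fun _ => t : Fin (n+2) → ℝ) i) :=
        mul_le_mul_of_nonneg_left (nestR_ofFn_rpow_neg_le hx hs ht hc)
          (Finset.prod_nonneg fun i _ =>
            mul_nonneg (Real.rpow_nonneg (hx0 i).le _) (Real.rpow_nonneg (hx1 i).le _))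
    _ = _ := by
        rw [← Finset.prod_mul_distrib]
        refine Finset.prod_congr rfl fun i _ => ?_
        rw [sub_right_comm _ t, sub_right_comm (β i), sub_eq_add_neg _ t, sub_eq_add_neg (β i - 1),
          Real.rpow_add (hx0 i), Real.rpow_add (hx1 i)]
        ring

lemma integrableOn_rpow_mul_one_sub_rpow {p q : ℝ} (hp : 0 < p) (hq : 0 < q) :
    IntegrableOn (fun t : ℝ => t ^ (p - 1) * (1 - t) ^ (q - 1)) (Ioo 0 1) := by
  have hbeta : IntegrableOn (fun t : ℝ => (t : ℂ) ^ ((p : ℂ) - 1) * (1 - (t : ℂ)) ^ ((q : ℂ) - 1))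
      (Ioc 0 1) := by
    simpa [intervalIntegrable_iff_integrableOn_Ioc_of_le] using
      Complex.betaIntegral_convergent (u := p) (v := q) (by simpa) (by simpa)
  refine (IntegrableOn.mono_set hbeta.norm Ioo_subset_Ioc_self).congr_fun (fun t ht => ?_)
    measurableSet_Ioo
  have h1t : (1 : ℂ) - t = ((1 - t : ℝ) : ℂ) := by push_cast; ring
  dsimp only
  rw [norm_mul, h1t,
    Complex.norm_cpow_eq_rpow_re_of_pos ht.1, Complex.norm_cpow_eq_rpow_re_of_pos (sub_pos.2 ht.2)]
  norm_num

lemma integrableOn_prod_rpow_mul_one_sub_rpow {ι : Type*} [Fintype ι] {p q : ι → ℝ}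
    (hp : ∀ i, 0 < p i) (hq : ∀ i, 0 < q i) :
    IntegrableOn (fun x : ι → ℝ => ∏ i, x i ^ (p i - 1) * (1 - x i) ^ (q i - 1))
      (univ.pi fun _ => Ioo 0 1) := by
  rw [IntegrableOn, volume_pi, Measure.restrict_pi_pi]
  exact Integrable.fintype_prod (f := fun i t => t ^ (p i - 1) * (1 - t) ^ (q i - 1))
    fun i => integrableOn_rpow_mul_one_sub_rpow (hp i) (hq i)

lemma exists_pos_forall_lt {ι : Type*} [Finite ι] {f : ι → ℝ} (hf : ∀ i, 0 < f i) :
    ∃ t, 0 < t ∧ ∀ i, t < f i :=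
  (Filter.Eventually.and (self_mem_nhdsWithin : ∀ᶠ t in nhdsWithin (0:ℝ) (Ioi 0), 0 < t)
    ((Filter.eventually_all.2 fun i => eventually_lt_nhds (hf i)).filter_mono
      nhdsWithin_le_nhds)).exists

lemma norm_prod_cpow_div_ofReal_cpow {ι : Type*} [Fintype ι] {x : ι → ℝ}
    (hx : ∀ i, x i ∈ Ioo (0:ℝ) 1) {Q : ℝ} (hQ : 0 < Q) (α β : ι → ℂ) (c : ℂ) :
    ‖(∏ i, (x i : ℂ) ^ (α i - 1) * ((1 - x i : ℝ) : ℂ) ^ (β i - 1)) / (Q : ℂ) ^ c‖ =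
      (∏ i, x i ^ ((α i).re - 1) * (1 - x i) ^ ((β i).re - 1)) * Q ^ (-c.re) := by
  rw [norm_div, norm_prod, Complex.norm_cpow_eq_rpow_re_of_pos hQ, Real.rpow_neg hQ.le,
    div_eq_mul_inv]
  congr 1
  refine Finset.prod_congr rfl fun i _ => ?_
  rw [norm_mul, Complex.norm_cpow_eq_rpow_re_of_pos (hx i).1,
    Complex.norm_cpow_eq_rpow_re_of_pos (sub_pos.2 (hx i).2)]
  simp

/-- absolute convergence of the Vasilyev-type integral `J_m` at `z = 1`. -/
theorem J_integrable (m : ℕ) (hm : 2 ≤ m) (a b : ℕ → ℂ)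
    (hab : ∀ i : ℕ, 1 ≤ i → i ≤ m → (a i).re < (b i).re ∧ 0 < (a i).re)
    (h1 : (a 0).re ≤ (b 1 - a 1).re) :
    IntegrableOn (fun x : Fin m → ℝ =>
        (∏ i : Fin m, ((x i : ℂ) ^ (a (i.1+1) - 1) *
            ((1 - x i : ℝ) : ℂ) ^ (b (i.1+1) - a (i.1+1) - 1))) /
          ((1 - ((nestR (List.ofFn x).tail * (List.ofFn x).headI : ℝ) : ℂ)) ^ (a 0)))
      (Set.univ.pi fun _ : Fin m => Set.Ioo (0:ℝ) 1) := by
  obtain ⟨n, rfl⟩ : ∃ n, m = n + 2 := ⟨m - 2, by omega⟩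
  have hden : ∀ x : Fin (n+2) → ℝ,
      1 - ((nestR (List.ofFn x).tail * (List.ofFn x).headI : ℝ) : ℂ) = nestR (List.ofFn x) :=
    fun x => by rw [nestR_eq_one_sub_nestR_tail_mul_headI (List.ofFn x)]; push_cast; ring
  simp only [hden]
  set α : Fin (n+2) → ℝ := fun i => (a (i.1+1)).re
  set β : Fin (n+2) → ℝ := fun i => (b (i.1+1) - a (i.1+1)).re
  have hα : ∀ i, 0 < α i := fun i => (hab (i.1+1) (by omega) (by omega)).2
  have hβ : ∀ i, 0 < β i := fun i => by
    simpa [β] using (hab (i.1+1) (by omega) (by omega)).1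
  obtain ⟨t, ht0, ht⟩ := exists_pos_forall_lt fun i => lt_min (hα i) (hβ i)
  obtain ⟨s, hs0, hsβ, hst⟩ : ∃ s, 0 ≤ s ∧ s < β 0 ∧ (a 0).re ≤ s + t :=
    ⟨max ((a 0).re - t) 0, le_max_right _ _,
      max_lt (by linarith [show (a 0).re ≤ β 0 from h1]) (hβ 0),
      by linarith [le_max_left ((a 0).re - t) 0]⟩
  have hq : ∀ i, 0 < β i - (Fin.cons s fun _ => t : Fin (n+2) → ℝ) i :=
    Fin.cases (by simpa using hsβ) fun i => by simpa using (ht i.succ).trans_le (min_le_right _ _)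
  have hmeas := (continuous_nestR_ofFn (n+2)).measurable
  refine (integrableOn_prod_rpow_mul_one_sub_rpow (p := fun i => α i - t)
    (fun i => sub_pos.2 ((ht i).trans_le (min_le_left _ _))) hq).mono'
    (by fun_prop : Measurable _).aestronglyMeasurable ?_
  filter_upwards [ae_restrict_mem (MeasurableSet.univ_pi fun _ => measurableSet_Ioo)] with x hx
  have hx' : ∀ i, x i ∈ Ioo (0:ℝ) 1 := fun i => hx i (mem_univ i)
  rw [norm_prod_cpow_div_ofReal_cpow hx' (nestR_ofFn_pos hx') (fun i => a (i.1+1))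
    (fun i => b (i.1+1) - a (i.1+1))]
  exact prod_rpow_mul_nestR_ofFn_rpow_neg_le hx' α β hs0 ht0.le hst
end

section
/- For a non-negative integer N and complex a with Re(a) > −1 (and 1+a+N not a non-positive integer), the ratio |(−N)_k / (1+a+N)_k| is bounded above uniformly in k and N: there is a constant depending only on a such that |(−N)_k / (1+a+N)_k| ≤ C for all non-negative integers k and N. In particular, for N ≥ k > |a|, |(−N)_k/(1+a+N)_k| ≤ 1, and (−N)_k = 0 for k > N. -/
open MeasureTheory

lemma poch_ratio_le_one (a : ℂ) (ha : -1 < a.re) (N k : ℕ) :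
    ‖poch (-(N : ℂ)) k / poch (1 + a + N) k‖ ≤ 1 := by
  have hden : ∀ i : ℕ, (0:ℝ) < (1 + a + (N:ℂ) + (i:ℂ)).re := by
    intro i
    simp only [Complex.add_re, Complex.one_re, Complex.natCast_re]
    have h1 : (0:ℝ) ≤ (N:ℝ) := Nat.cast_nonneg N
    have h2 : (0:ℝ) ≤ (i:ℝ) := Nat.cast_nonneg i
    linarith
  have hdenne : poch (1 + a + N) k ≠ 0 := by
    unfold poch
    refine Finset.prod_ne_zero_iff.2 fun i _ h => ?_
    have := hden i
    rw [h] at this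
    simp at this
  rw [norm_div, div_le_one (norm_pos_iff.2 hdenne)]
  unfold poch
  rw [norm_prod, norm_prod]
  refine Finset.prod_le_prod (fun i _ => norm_nonneg _) (fun i _ => ?_)
  have hnum : (-(N:ℂ) + (i:ℂ)) = (((i:ℝ) - (N:ℝ) : ℝ) : ℂ) := by push_cast; ring
  rw [hnum, Complex.norm_real, Real.norm_eq_abs]
  have hre : (1 + a + (N:ℂ) + (i:ℂ)).re ≤ ‖1 + a + (N:ℂ) + (i:ℂ)‖ :=
    Complex.re_le_norm _
  have habs : |(i:ℝ) - (N:ℝ)| ≤ (N:ℝ) + (i:ℝ) := by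
    rw [abs_sub_le_iff]
    constructor <;> [linarith [Nat.cast_nonneg (α := ℝ) N]; linarith [Nat.cast_nonneg (α := ℝ) i]]
  have : (N:ℝ) + (i:ℝ) ≤ (1 + a + (N:ℂ) + (i:ℂ)).re := by
    simp only [Complex.add_re, Complex.one_re, Complex.natCast_re]
    linarith
  linarith

/-- uniform boundedness of `(-N)_k / (1+a+N)_k`. -/
theorem poch_ratio_bounded (a : ℂ) (ha : -1 < a.re) :
    (∃ C : ℝ, 0 < C ∧ ∀ N k : ℕ,
        ‖poch (-(N : ℂ)) k / poch (1 + a + N) k‖ ≤ C) ∧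
    (∀ N k : ℕ, k ≤ N → ‖a‖ < k → ‖poch (-(N : ℂ)) k / poch (1 + a + N) k‖ ≤ 1) ∧
    (∀ N k : ℕ, N < k → poch (-(N : ℂ)) k = 0) := by
  refine ⟨⟨1, one_pos, fun N k => poch_ratio_le_one a ha N k⟩,
    fun N k _ _ => poch_ratio_le_one a ha N k, fun N k hNk => ?_⟩
  unfold poch
  exact Finset.prod_eq_zero (Finset.mem_range.2 hNk) (by simp)
end
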